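/- arXiv:2205.06383 — 2 statements merged into one kernel-verified Lean document; each statement's English description precedes it below -/
import Mathlib

section
/- Let B be a group, δ, ρ ∈ B, and z ∈ Z(B) a central element. Suppose δ^r = z and ρ^d = z, ρ and δ commute, and B is torsion-free. Set k = gcd(d,r), d = d'k, r = r'k. Then for any integers u, v with d'u + r'v = 1, the element q = ρ^v δ^u does not depend on the choice of (u,v). -/
/-!
Both `δ ^ (r / k)` and `ρ ^ (d / k)` are `k`-th roots of `z`, and they commute, so torsion-freeness
makes them equal. Hence the homomorphism `(a, b) ↦ ρ ^ a * δ ^ b` from `ℤ²` kills `(-d', r')`, and two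
Bézout pairs for the coprime `d', r'` differ by a multiple of exactly this vector.
-/

theorem eq_of_pow_eq_pow_of_commute {G : Type*} [Group G]
    (htf : ∀ g : G, ∀ m : ℕ, 0 < m → g ^ m = 1 → g = 1) {a b : G} (hab : Commute a b)
    {k : ℕ} (hk : 0 < k) (h : a ^ k = b ^ k) : a = b := by
  refine mul_inv_eq_one.mp (htf _ k hk ?_)
  rw [(hab.inv_right).mul_pow, inv_pow, h, mul_inv_cancel]

theorem pow_div_gcd_eq_of_pow_eq {G : Type*} [Group G]
    (htf : ∀ g : G, ∀ m : ℕ, 0 < m → g ^ m = 1 → g = 1) {δ ρ : G} (hcomm : Commute δ ρ)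
    {r d : ℕ} (hk : 0 < Nat.gcd d r) (h : δ ^ r = ρ ^ d) :
    δ ^ (r / Nat.gcd d r) = ρ ^ (d / Nat.gcd d r) := by
  refine eq_of_pow_eq_pow_of_commute htf (hcomm.pow_pow _ _) hk ?_
  rwa [← pow_mul, ← pow_mul, Nat.div_mul_cancel (Nat.gcd_dvd_right d r),
    Nat.div_mul_cancel (Nat.gcd_dvd_left d r)]

theorem IsCoprime.exists_eq_add_mul_of_add_mul_eq {D R u v u' v' : ℤ} (hDR : IsCoprime D R)
    (h : D * u + R * v = D * u' + R * v') : ∃ t, u = u' + R * t ∧ v' = v + D * t := by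
  obtain ⟨x, y, hxy⟩ := hDR
  refine ⟨y * (u - u') - x * (v - v'), ?_, ?_⟩
  · linear_combination (u' - u) * hxy + x * h
  · linear_combination (v - v') * hxy - y * h

theorem zpow_mul_zpow_eq_of_add_mul_eq {G : Type*} [Group G] {δ ρ : G} (hcomm : Commute ρ δ)
    {D R : ℤ} (hDR : IsCoprime D R) (hkey : δ ^ R = ρ ^ D) {u v u' v' : ℤ}
    (h : D * u + R * v = D * u' + R * v') : ρ ^ v * δ ^ u = ρ ^ v' * δ ^ u' := by
  obtain ⟨t, rfl, rfl⟩ := hDR.exists_eq_add_mul_of_add_mul_eq h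
  rw [zpow_add, zpow_mul, hkey, ← zpow_mul, ← mul_assoc, zpow_add, mul_assoc (ρ ^ v),
    ← (hcomm.zpow_zpow _ u').eq, mul_assoc]

theorem stmt_1_general {B : Type*} [Group B] (z δ ρ : B)
    (htf : ∀ g : B, ∀ m : ℕ, 0 < m → g ^ m = 1 → g = 1)
    (hcomm : δ * ρ = ρ * δ)
    (r d : ℕ)
    (hδ : δ ^ r = z) (hρ : ρ ^ d = z)
    (u v u' v' : ℤ)
    (huv : (d / Nat.gcd d r : ℕ) * u + (r / Nat.gcd d r : ℕ) * v = 1)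
    (huv' : (d / Nat.gcd d r : ℕ) * u' + (r / Nat.gcd d r : ℕ) * v' = 1) :
    ρ ^ v * δ ^ u = ρ ^ v' * δ ^ u' := by
  have hk : 0 < Nat.gcd d r := Nat.pos_of_ne_zero fun h => by simp [h] at huv
  have hkey : δ ^ ((r / Nat.gcd d r : ℕ) : ℤ) = ρ ^ ((d / Nat.gcd d r : ℕ) : ℤ) := by
    exact_mod_cast pow_div_gcd_eq_of_pow_eq htf hcomm hk (hδ.trans hρ.symm)
  have hcop : IsCoprime ((d / Nat.gcd d r : ℕ) : ℤ) ((r / Nat.gcd d r : ℕ) : ℤ) :=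
    Nat.isCoprime_iff_coprime.mpr (Nat.coprime_div_gcd_div_gcd hk)
  exact zpow_mul_zpow_eq_of_add_mul_eq (Commute.symm hcomm) hcop hkey (huv.trans huv'.symm)

/-- Independence of `ρ^v * δ^u` of the choice of Bézout pair `(u,v)`. -/
theorem stmt_1 {B : Type*} [Group B] (z δ ρ : B)
    (htf : ∀ g : B, ∀ m : ℕ, 0 < m → g ^ m = 1 → g = 1)
    (hz : ∀ b : B, z * b = b * z)
    (hcomm : δ * ρ = ρ * δ)
    (r d : ℕ) (hr : 0 < r) (hd : 0 < d)
    (hδ : δ ^ r = z) (hρ : ρ ^ d = z)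
    (u v u' v' : ℤ)
    (huv : (d / Nat.gcd d r : ℕ) * u + (r / Nat.gcd d r : ℕ) * v = 1)
    (huv' : (d / Nat.gcd d r : ℕ) * u' + (r / Nat.gcd d r : ℕ) * v' = 1) :
    ρ ^ v * δ ^ u = ρ ^ v' * δ ^ u' :=
  stmt_1_general z δ ρ htf hcomm r d hδ hρ u v u' v' huv huv'
end

section
/- In the group B₁₂ = ⟨s,t,u | stus = tust = ustu⟩ with Δ = stus, the element Δ³ is central, and Δ³ = (stu)⁴. -/
/-- Relations of the braid group of `G₁₂`: `⟨s,t,u | stus = tust = ustu⟩`. -/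
def B12Rels : Set (FreeGroup (Fin 3)) :=
  let s := FreeGroup.of (0 : Fin 3)
  let t := FreeGroup.of (1 : Fin 3)
  let u := FreeGroup.of (2 : Fin 3)
  {s * t * u * s * (t * u * s * t)⁻¹, t * u * s * t * (u * s * t * u)⁻¹}

/-! Conjugation by `Δ = stus` permutes the generators cyclically, so `Δ³` centralises
them; and `(stu)⁴ = stus · tust · ustu` is a product of three words equal to `Δ`. -/

theorem commute_pow_three_of_semiconjBy_cycle {M : Type*} [Monoid M] {d a b c : M}
    (hab : SemiconjBy d b a) (hbc : SemiconjBy d c b) (hca : SemiconjBy d a c) :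
    Commute (d ^ 3) a := by
  rw [pow_three']
  exact (hab.mul_left hbc).mul_left hca

section B12Relations

variable {G : Type*} [Group G] {s t u : G}

theorem semiconjBy_stus_t_s (h₁ : s * t * u * s = t * u * s * t) :
    SemiconjBy (s * t * u * s) t s :=
  calc s * t * u * s * t = s * (t * u * s * t) := by group
    _ = s * (s * t * u * s) := by rw [h₁]

theorem semiconjBy_stus_u_t (h₁ : s * t * u * s = t * u * s * t)
    (h₂ : t * u * s * t = u * s * t * u) :
    SemiconjBy (s * t * u * s) u t :=
  calc s * t * u * s * u = t * u * s * t * u := by rw [h₁]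
    _ = t * (u * s * t * u) := by group
    _ = t * (s * t * u * s) := by rw [h₁, h₂]

theorem semiconjBy_stus_s_u (h₁ : s * t * u * s = t * u * s * t)
    (h₂ : t * u * s * t = u * s * t * u) :
    SemiconjBy (s * t * u * s) s u :=
  calc s * t * u * s * s = u * s * t * u * s := by rw [h₁, h₂]
    _ = u * (s * t * u * s) := by group

theorem stu_pow_four_eq_stus_pow_three (h₁ : s * t * u * s = t * u * s * t)
    (h₂ : t * u * s * t = u * s * t * u) :
    (s * t * u) ^ 4 = (s * t * u * s) ^ 3 :=
  calc (s * t * u) ^ 4 = (s * t * u * s) * (t * u * s * t) * (u * s * t * u) := by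
        simp only [pow_succ, pow_zero, one_mul, mul_assoc]
    _ = (s * t * u * s) ^ 3 := by rw [← h₂, ← h₁, pow_three']

end B12Relations

/-- In `B₁₂` with `Δ = stus`, one has `(stu)⁴ = Δ³` and `Δ³` is central. -/
theorem stmt_14 :
    let s := PresentedGroup.of (rels := B12Rels) (0 : Fin 3)
    let t := PresentedGroup.of (rels := B12Rels) (1 : Fin 3)
    let u := PresentedGroup.of (rels := B12Rels) (2 : Fin 3)
    let Δ := s * t * u * s
    (s * t * u) ^ 4 = Δ ^ 3 ∧
    Δ ^ 3 * s = s * Δ ^ 3 ∧ Δ ^ 3 * t = t * Δ ^ 3 ∧ Δ ^ 3 * u = u * Δ ^ 3 := by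
  intro s t u Δ
  have h₁ : s * t * u * s = t * u * s * t :=
    PresentedGroup.mk_eq_mk_of_mul_inv_mem (Set.mem_insert _ _)
  have h₂ : t * u * s * t = u * s * t * u :=
    PresentedGroup.mk_eq_mk_of_mul_inv_mem (Set.mem_insert_of_mem _ rfl)
  have hs := semiconjBy_stus_s_u h₁ h₂
  have ht := semiconjBy_stus_t_s h₁
  have hu := semiconjBy_stus_u_t h₁ h₂
  exact ⟨stu_pow_four_eq_stus_pow_three h₁ h₂,
    (commute_pow_three_of_semiconjBy_cycle ht hu hs).eq,
    (commute_pow_three_of_semiconjBy_cycle hu hs ht).eq,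
    (commute_pow_three_of_semiconjBy_cycle hs ht hu).eq⟩
end
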